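/- arXiv:2510.25869 — 2 statements merged into one kernel-verified Lean document; each statement's English description precedes it below -/
import Mathlib

section
/- For any discrete random variable X taking values in ℤ with finite variance, sup_x P(X = x) ≥ 1/√(1 + 12 Var(X)). -/
/-!
Smooth `X` by an independent uniform noise on `[-1/2, 1/2]`: the result has a density bounded by
`M = sup_x P(X = x)` and second moment `E (X - a)² + 1/12` about any `a`, by
`∫_{x-1/2}^{x+1/2} (y - a)² dy = (x - a)² + 1/12`. A density bounded by `M` has second moment at
least `1 / (12 M²)`, the value for the uniform density on an interval of length `1 / M`; this
follows by comparing `(y - a)²` with the bump `max (r² - (y - a)²) 0`, `r = 1 / (2 M)`, whose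
integral is `4 r³ / 3`.
-/

open MeasureTheory ProbabilityTheory Set

lemma integral_sub_sq_of_unit_interval (x a : ℝ) :
    ∫ y in x - 1/2..x + 1/2, (y - a) ^ 2 = (x - a) ^ 2 + 1 / 12 := by
  rw [intervalIntegral.integral_comp_sub_right (· ^ 2), integral_pow]
  ring

lemma max_sub_sq_eq_indicator (a y : ℝ) {r : ℝ} (hr : 0 ≤ r) :
    max (r ^ 2 - (y - a) ^ 2) 0 =
      (Icc (a - r) (a + r)).indicator (fun y => r ^ 2 - (y - a) ^ 2) y := by
  by_cases hy : y ∈ Icc (a - r) (a + r)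
  · rw [indicator_of_mem hy, max_eq_left]
    rw [mem_Icc] at hy
    nlinarith
  · rw [indicator_of_notMem hy, max_eq_right]
    rw [mem_Icc, not_and_or, not_le, not_le] at hy
    rcases hy with hy | hy <;> nlinarith

lemma integrable_max_sub_sq (a : ℝ) {r : ℝ} (hr : 0 ≤ r) :
    Integrable (fun y => max (r ^ 2 - (y - a) ^ 2) 0) := by
  simp_rw [max_sub_sq_eq_indicator a _ hr]
  exact (integrable_indicator_iff measurableSet_Icc).2
    (Continuous.integrableOn_Icc (by fun_prop))

lemma integral_max_sub_sq (a : ℝ) {r : ℝ} (hr : 0 ≤ r) :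
    ∫ y, max (r ^ 2 - (y - a) ^ 2) 0 = 4 / 3 * r ^ 3 := by
  simp_rw [max_sub_sq_eq_indicator a _ hr]
  rw [integral_indicator measurableSet_Icc, integral_Icc_eq_integral_Ioc,
    ← intervalIntegral.integral_of_le (by linarith),
    intervalIntegral.integral_comp_sub_right (fun y => r ^ 2 - y ^ 2),
    intervalIntegral.integral_sub intervalIntegrable_const
      ((continuous_pow 2).intervalIntegrable _ _), intervalIntegral.integral_const, integral_pow]
  ring

lemma hasSum_integral_max_sub_sq (a : ℝ) {r : ℝ} (hr : 0 ≤ r) :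
    HasSum (fun x : ℤ => ∫ y in x - 1/2..x + 1/2, max (r ^ 2 - (y - a) ^ 2) 0)
      (4 / 3 * r ^ 3) := by
  rw [← integral_max_sub_sq a hr]
  have h := (integrable_max_sub_sq a hr).hasSum_intervalIntegral (-1/2)
  simp only [neg_div, neg_add_eq_sub, sub_add_eq_add_sub, add_sub_assoc] at h
  norm_num at h
  exact h

lemma mul_sub_max_sub_le {p M : ℝ} (hp : 0 ≤ p) (hpM : p ≤ M) (r t : ℝ) :
    p * r ^ 2 - M * max (r ^ 2 - t) 0 ≤ p * t := by
  nlinarith [mul_le_mul_of_nonneg_right hpM (le_max_right (r ^ 2 - t) 0),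
    mul_le_mul_of_nonneg_left (le_max_left (r ^ 2 - t) 0) hp]

lemma mul_sub_integral_max_sub_sq_le {p M : ℝ} (hp : 0 ≤ p) (hpM : p ≤ M) (x a r : ℝ) :
    p * r ^ 2 - M * ∫ y in x - 1/2..x + 1/2, max (r ^ 2 - (y - a) ^ 2) 0 ≤
      p * ((x - a) ^ 2 + 1 / 12) := by
  rw [← integral_sub_sq_of_unit_interval, ← intervalIntegral.integral_const_mul,
    ← intervalIntegral.integral_const_mul]
  calc p * r ^ 2 - ∫ y in x - 1/2..x + 1/2, M * max (r ^ 2 - (y - a) ^ 2) 0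
      = ∫ y in x - 1/2..x + 1/2, (p * r ^ 2 - M * max (r ^ 2 - (y - a) ^ 2) 0) := by
        rw [intervalIntegral.integral_sub intervalIntegrable_const
          (Continuous.intervalIntegrable (by fun_prop) _ _)]
        norm_num
    _ ≤ ∫ y in x - 1/2..x + 1/2, p * (y - a) ^ 2 :=
        intervalIntegral.integral_mono (by linarith)
          (Continuous.intervalIntegrable (by fun_prop) _ _)
          (Continuous.intervalIntegrable (by fun_prop) _ _)
          fun y => mul_sub_max_sub_le hp hpM r _

lemma one_le_sq_mul_of_hasSum_sub_sq {p : ℤ → ℝ} (hp : ∀ x, 0 ≤ p x) (hp1 : HasSum p 1)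
    {M : ℝ} (hpM : ∀ x, p x ≤ M) {a V : ℝ}
    (hV : HasSum (fun x : ℤ => p x * ((x : ℝ) - a) ^ 2) V) :
    1 ≤ M ^ 2 * (1 + 12 * V) := by
  obtain ⟨x₀, hx₀⟩ : ∃ x, p x ≠ 0 := by
    by_contra! h
    exact one_ne_zero (hp1.unique (by simp [funext h]))
  have hM : 0 < M := ((hp x₀).lt_of_ne' hx₀).trans_le (hpM x₀)
  set r := (2 * M)⁻¹
  have hlower := (hp1.mul_right (r ^ 2)).sub
    ((hasSum_integral_max_sub_sq a (by positivity : 0 ≤ r)).mul_left M)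
  have hupper : HasSum (fun x : ℤ => p x * (((x : ℝ) - a) ^ 2 + 1 / 12)) (V + 1 / 12) := by
    simpa only [mul_add, one_mul] using hV.add (hp1.mul_right (1 / 12))
  have hle := hasSum_le (fun x => mul_sub_integral_max_sub_sq_le (hp x) (hpM x) x a r)
    hlower hupper
  have hr : 1 * r ^ 2 - M * (4 / 3 * r ^ 3) = (12 * M ^ 2)⁻¹ := by
    simp only [r]
    field_simp
    ring
  rw [hr, inv_le_iff_one_le_mul₀ (by positivity)] at hle
  linarith

lemma hasSum_integral_comp_of_countable {Ω α : Type*} [MeasurableSpace Ω] [MeasurableSpace α]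
    [Countable α] [MeasurableSingletonClass α] {μ : Measure Ω} {X : Ω → α} (hX : Measurable X)
    {g : α → ℝ} (hg : Integrable (fun ω => g (X ω)) μ) :
    HasSum (fun x => (μ {ω | X ω = x}).toReal * g x) (∫ ω, g (X ω) ∂μ) := by
  have hgX : Integrable g (μ.map X) :=
    (integrable_map_measure (measurable_of_countable g).aestronglyMeasurable hX.aemeasurable).2 hg
  rw [← integral_map hX.aemeasurable (measurable_of_countable g).aestronglyMeasurable]
  rw [← Measure.sum_smul_dirac (μ.map X)] at hgX
  have h := hasSum_integral_measure hgX
  rw [Measure.sum_smul_dirac] at h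
  simp only [integral_smul_measure, integral_dirac,
    Measure.map_apply hX (measurableSet_singleton _), smul_eq_mul] at h
  exact h

/-- For any `ℤ`-valued random variable with finite variance,
`M(X) ≥ 1/√(1 + 12 Var X)`. -/
theorem max_prob_ge {Ω : Type*} [MeasurableSpace Ω] (μ : Measure Ω)
    [IsProbabilityMeasure μ] (X : Ω → ℤ) (hX : Measurable X)
    (hvar : MemLp (fun ω => (X ω : ℝ)) 2 μ) :
    (⨆ x : ℤ, (μ {ω | X ω = x}).toReal) ≥
      1 / Real.sqrt (1 + 12 * variance (fun ω => (X ω : ℝ)) μ) := by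
  set p : ℤ → ℝ := fun x => (μ {ω | X ω = x}).toReal
  have hp1 : HasSum p 1 := by
    simpa using hasSum_integral_comp_of_countable hX (g := fun _ => (1 : ℝ))
      (integrable_const (μ := μ) 1)
  have hV : HasSum (fun x : ℤ => p x * ((x : ℝ) - μ[fun ω => (X ω : ℝ)]) ^ 2)
      (variance (fun ω => (X ω : ℝ)) μ) := by
    rw [variance_eq_integral hvar.aestronglyMeasurable.aemeasurable]
    exact hasSum_integral_comp_of_countable hX (hvar.sub (memLp_const _)).integrable_sq
  have hpM : ∀ x, p x ≤ ⨆ x, p x :=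
    le_ciSup ⟨1, by rintro _ ⟨x, rfl⟩; exact measureReal_le_one (μ := μ) (s := {ω | X ω = x})⟩
  have key := one_le_sq_mul_of_hasSum_sub_sq (fun _ => ENNReal.toReal_nonneg) hp1 hpM hV
  have hs : 0 < 1 + 12 * variance (fun ω => (X ω : ℝ)) μ := by
    linarith [variance_nonneg (fun ω => (X ω : ℝ)) μ]
  rw [ge_iff_le, div_le_iff₀ (Real.sqrt_pos.2 hs),
    ← Real.sqrt_sq (Real.iSup_nonneg fun _ => ENNReal.toReal_nonneg),
    ← Real.sqrt_mul (sq_nonneg _)]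
  exact Real.one_le_sqrt.2 key
end

section
/- For any nonzero reals a_1,…,a_n there exists a ℚ-linear map T : ℝ → ℚ such that T(a_i) is a nonzero integer for every i. -/
/-! Since `ℚ` is infinite, the `ℚ`-dual of `ℝ` is not the union of the finitely many proper
subspaces `{f | f (a i) = 0}`, so some `f : ℝ →ₗ[ℚ] ℚ` takes nonzero values at all `a i`;
multiplying `f` by a common denominator of these values makes them nonzero integers. -/

/-- For nonzero reals `a 1, …, a n` there is a `ℚ`-linear map `T : ℝ → ℚ` with
`T (a i)` a nonzero integer for every `i`. -/
theorem exists_rat_linear_map_to_nonzero_int (n : ℕ) (a : Fin n → ℝ)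
    (ha : ∀ i, a i ≠ 0) :
    ∃ T : ℝ →ₗ[ℚ] ℚ, ∀ i, ∃ m : ℤ, m ≠ 0 ∧ T (a i) = (m : ℚ) := by
  obtain ⟨f, hf⟩ := Module.exists_dual_forall_apply_ne_zero (K := ℚ) a ha
  obtain ⟨d, hd⟩ :=
    IsLocalization.exist_integer_multiples_of_finite (nonZeroDivisors ℤ) fun i => f (a i)
  have hd0 : ((d : ℤ) : ℚ) ≠ 0 := Int.cast_ne_zero.mpr (nonZeroDivisors.coe_ne_zero d)
  refine ⟨((d : ℤ) : ℚ) • f, fun i => ?_⟩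
  obtain ⟨m, hm⟩ := hd i
  rw [eq_intCast, zsmul_eq_mul] at hm
  refine ⟨m, ?_, hm.symm⟩
  rintro rfl
  exact mul_ne_zero hd0 (hf i) (by exact_mod_cast hm.symm)
end
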